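/- Let (X,d,μ) be a quasi-metric-measure space. If (X,d) is totally bounded, then μ is integrable, i.e., there is a quasi-metric ρ equivalent to d such that for each fixed r > 0 the map x ↦ μ(B_ρ(x,r)) is measurable and ∫_X 1/μ(B_ρ(x,r)) dμ(x) < ∞. -/

import Mathlib

open Set MeasureTheory Topology
open scoped ENNReal NNReal

variable {X : Type*}

/-- The ball with respect to a quasi-metric `d`. -/
def qball (d : X → X → ℝ) (x : X) (r : ℝ) : Set X := {y | d x y < r}

/-- The topology induced by a quasi-metric: a set is open iff every one of its
points admits a ball contained in the set. -/
def quasiMetricTopology (d : X → X → ℝ) : TopologicalSpace X where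
  IsOpen O := ∀ x ∈ O, ∃ r > 0, qball d x r ⊆ O
  isOpen_univ := fun _ _ => ⟨1, one_pos, fun _ _ => trivial⟩
  isOpen_inter := by
    intro O₁ O₂ h₁ h₂ x hx
    obtain ⟨r₁, hr₁, hs₁⟩ := h₁ x hx.1
    obtain ⟨r₂, hr₂, hs₂⟩ := h₂ x hx.2
    refine ⟨min r₁ r₂, lt_min hr₁ hr₂, fun y hy => ⟨hs₁ ?_, hs₂ ?_⟩⟩
    · exact lt_of_lt_of_le (show d x y < min r₁ r₂ from hy) (min_le_left _ _)
    · exact lt_of_lt_of_le (show d x y < min r₁ r₂ from hy) (min_le_right _ _)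
  isOpen_sUnion := by
    intro S hS x hx
    obtain ⟨O, hO, hxO⟩ := hx
    obtain ⟨r, hr, hsub⟩ := hS O hO x hxO
    exact ⟨r, hr, fun y hy => ⟨O, hO, hsub hy⟩⟩

/-- `μ` is an integrable measure: there is a quasi-metric `ρ` equivalent to
`d` such that for every `r > 0` the map `x ↦ μ(B_ρ(x,r))` is measurable and
`∫_X 1/μ(B_ρ(x,r)) dμ(x) < ∞`. -/
def IntegrableQMeasure [MeasurableSpace X] (d : X → X → ℝ)
    (μ : MeasureTheory.Measure X) : Prop :=
  ∃ ρ : X → X → ℝ,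
    (∀ x y, 0 ≤ ρ x y) ∧ (∀ x y, ρ x y = 0 ↔ x = y) ∧
    (∃ C₀ : ℝ, 1 ≤ C₀ ∧ ∀ x y, ρ y x ≤ C₀ * ρ x y) ∧
    (∃ C₁ : ℝ, 1 ≤ C₁ ∧ ∀ x y z, ρ x y ≤ C₁ * max (ρ x z) (ρ z y)) ∧
    (∃ κ : ℝ, 0 < κ ∧ ∀ x y, κ⁻¹ * ρ x y ≤ d x y ∧ d x y ≤ κ * ρ x y) ∧
    ∀ r : ℝ, 0 < r →
      Measurable (fun x => μ (qball ρ x r)) ∧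
      (∫⁻ x, (μ (qball ρ x r))⁻¹ ∂μ) < ⊤

/-!
Total boundedness yields a countable set `D` that is dense for `d`. The regularization
`ρ x y = ⨅ u ∈ D, (d u x + d u y)` is symmetric and comparable to `d`, and, being an infimum
over a countable family, its sublevel sets in `X × X` are measurable; hence
`x ↦ μ (B_ρ(x, r))` is measurable. Covering `X` by finitely many balls of a small radius `s`
shows that `μ` is finite and that every `ρ`-ball of radius `r` contains one of these finitely
many balls, so `1 / μ (B_ρ(x, r))` is bounded.
-/

def QDense (d : X → X → ℝ) (D : Set X) : Prop :=
  ∀ x, ∀ ε > 0, ∃ u ∈ D, d u x < ε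

noncomputable def regularize (d : X → X → ℝ) (D : Set X) (x y : X) : ℝ :=
  ⨅ u : D, (d u x + d u y)

section QuasiMetric

variable {d : X → X → ℝ} {D : Set X}

theorem QDense.nonempty (hD : QDense d D) (x : X) : D.Nonempty :=
  let ⟨u, hu, _⟩ := hD x 1 one_pos
  ⟨u, hu⟩

theorem exists_countable_qDense
    (hTB : ∀ r : ℝ, 0 < r → ∃ T : Set X, T.Finite ∧ univ ⊆ ⋃ y ∈ T, qball d y r) :
    ∃ D : Set X, D.Countable ∧ QDense d D := by
  choose S hSfin hScov using fun k : ℕ => hTB (1 / (k + 1)) (by positivity)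
  refine ⟨⋃ k, S k, countable_iUnion fun k => (hSfin k).countable, fun x ε hε => ?_⟩
  obtain ⟨k, hk⟩ := exists_nat_one_div_lt hε
  obtain ⟨u, hu, hux⟩ := mem_iUnion₂.mp (hScov k (mem_univ x))
  exact ⟨u, mem_iUnion_of_mem k hu, hux.trans hk⟩

theorem regularize_comm (x y : X) : regularize d D x y = regularize d D y x := by
  simp only [regularize, add_comm]

theorem regularize_nonneg (hnn : ∀ x y, 0 ≤ d x y) (x y : X) : 0 ≤ regularize d D x y :=
  Real.iInf_nonneg fun _ => add_nonneg (hnn _ _) (hnn _ _)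

theorem regularize_le_add (hnn : ∀ x y, 0 ≤ d x y) {u : X} (hu : u ∈ D) (x y : X) :
    regularize d D x y ≤ d u x + d u y := by
  refine ciInf_le ⟨0, ?_⟩ (⟨u, hu⟩ : D)
  rintro _ ⟨v, rfl⟩
  exact add_nonneg (hnn _ _) (hnn _ _)

theorem regularize_le {Cd : ℝ} (hnn : ∀ x y, 0 ≤ d x y) (hCd : 0 ≤ Cd)
    (htri : ∀ x y z, d x y ≤ Cd * max (d x z) (d z y)) (hD : QDense d D) (x y : X) :
    regularize d D x y ≤ Cd * d x y := by
  refine le_of_forall_pos_le_add fun ε hε => ?_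
  obtain ⟨u, hu, hux⟩ := hD x (ε / (1 + Cd)) (by positivity)
  have hux' : d u x * (1 + Cd) < ε := (lt_div_iff₀ (by positivity)).mp hux
  have huy : d u y ≤ Cd * (d u x + d x y) :=
    (htri u y x).trans (by gcongr; exact max_le_add_of_nonneg (hnn _ _) (hnn _ _))
  linarith [regularize_le_add hnn hu x y]

theorem le_regularize {Csym Cd : ℝ} (hnn : ∀ x y, 0 ≤ d x y) (hCsym : 1 ≤ Csym)
    (hsym : ∀ x y, d y x ≤ Csym * d x y) (hCd : 0 ≤ Cd)
    (htri : ∀ x y z, d x y ≤ Cd * max (d x z) (d z y)) (hD : QDense d D) (x y : X) :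
    d x y ≤ Cd * Csym * regularize d D x y := by
  have := (hD.nonempty x).to_subtype
  rw [regularize, Real.mul_iInf_of_nonneg (mul_nonneg hCd (zero_le_one.trans hCsym))]
  refine le_ciInf fun u => ?_
  have hmax : max (d x u) (d u y) ≤ Csym * (d u x + d u y) :=
    max_le (by nlinarith [hsym u x, hnn u x, hnn u y]) (by nlinarith [hnn u x, hnn u y])
  calc d x y ≤ Cd * max (d x u) (d u y) := htri x y u
    _ ≤ Cd * (Csym * (d u x + d u y)) := by gcongr
    _ = Cd * Csym * (d u x + d u y) := by ring

theorem measurable_of_measurableSet_qball [MeasurableSpace X] (hnn : ∀ x y, 0 ≤ d x y)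
    (hmeasB : ∀ (x : X) (r : ℝ), 0 < r → MeasurableSet (qball d x r)) (u : X) :
    Measurable (d u) := by
  refine measurable_of_Iio fun s => ?_
  rcases le_or_gt s 0 with hs | hs
  · convert MeasurableSet.empty
    exact eq_empty_of_forall_notMem fun x hx => (hnn u x).not_gt (lt_of_lt_of_le hx hs)
  · exact hmeasB u s hs

theorem measurableSet_regularize_lt [MeasurableSpace X] (hnn : ∀ x y, 0 ≤ d x y)
    (hd : ∀ u, Measurable (d u)) (hDc : D.Countable) (hD : QDense d D) (r : ℝ) :
    MeasurableSet {p : X × X | regularize d D p.1 p.2 < r} := by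
  have hunion : {p : X × X | regularize d D p.1 p.2 < r}
      = ⋃ u ∈ D, {p : X × X | d u p.1 + d u p.2 < r} := by
    ext p
    simp only [mem_ofPred_eq, mem_iUnion, exists_prop]
    constructor
    · intro hp
      have := (hD.nonempty p.1).to_subtype
      obtain ⟨⟨u, hu⟩, hlt⟩ := exists_lt_of_ciInf_lt hp
      exact ⟨u, hu, hlt⟩
    · rintro ⟨u, hu, hlt⟩
      exact (regularize_le_add hnn hu _ _).trans_lt hlt
  rw [hunion]
  exact MeasurableSet.biUnion hDc fun u _ => measurableSet_lt
    (((hd u).comp measurable_fst).add ((hd u).comp measurable_snd)) measurable_const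

end QuasiMetric

section Comparable

variable {ρ d : X → X → ℝ} {A B : ℝ}

theorem eq_zero_iff_of_comparable (hρ : ∀ x y, 0 ≤ ρ x y) (hnn : ∀ x y, 0 ≤ d x y)
    (heq : ∀ x y, d x y = 0 ↔ x = y) (hA : ∀ x y, ρ x y ≤ A * d x y)
    (hB : ∀ x y, d x y ≤ B * ρ x y) (x y : X) : ρ x y = 0 ↔ x = y := by
  constructor
  · intro h
    have := hB x y
    rw [h, mul_zero] at this
    exact (heq x y).mp (le_antisymm this (hnn x y))
  · rintro rfl
    have := hA x x
    rw [(heq x x).mpr rfl, mul_zero] at this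
    exact le_antisymm this (hρ x x)

theorem quasiTriangle_of_comparable {Cd : ℝ} (hA₀ : 0 ≤ A) (hB₀ : 0 ≤ B) (hCd : 0 ≤ Cd)
    (hA : ∀ x y, ρ x y ≤ A * d x y) (hB : ∀ x y, d x y ≤ B * ρ x y)
    (htri : ∀ x y z, d x y ≤ Cd * max (d x z) (d z y)) (x y z : X) :
    ρ x y ≤ A * Cd * B * max (ρ x z) (ρ z y) :=
  calc ρ x y ≤ A * d x y := hA x y
    _ ≤ A * (Cd * max (d x z) (d z y)) := by gcongr; exact htri x y z
    _ ≤ A * (Cd * max (B * ρ x z) (B * ρ z y)) := by gcongr <;> exact hB _ _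
    _ = A * Cd * B * max (ρ x z) (ρ z y) := by rw [← mul_max_of_nonneg _ _ hB₀]; ring

end Comparable

theorem qball_subset_qball_of_le {ρ d : X → X → ℝ} {C r : ℝ} (hC : 0 < C)
    (h : ∀ x y, ρ x y ≤ C * d x y) (x : X) : qball d x r ⊆ qball ρ x (C * r) :=
  fun z hz => (h x z).trans_lt (mul_lt_mul_of_pos_left hz hC)

theorem qball_subset_qball_of_mem {d : X → X → ℝ} {Csym Cd s : ℝ} (hCsym : 1 ≤ Csym)
    (hsym : ∀ x y, d y x ≤ Csym * d x y) (hCd : 0 < Cd)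
    (htri : ∀ x y z, d x y ≤ Cd * max (d x z) (d z y)) (hs : 0 ≤ s) {x y : X}
    (hyx : d y x < s) : qball d y s ⊆ qball d x (Cd * (Csym * s)) := by
  intro z hz
  have hxy : d x y < Csym * s := (hsym y x).trans_lt (mul_lt_mul_of_pos_left hyx (by linarith))
  have hyz : d y z < Csym * s := lt_of_lt_of_le hz (le_mul_of_one_le_left hs hCsym)
  exact (htri x z y).trans_lt (mul_lt_mul_of_pos_left (max_lt hxy hyz) hCd)

section Measure

variable [MeasurableSpace X] {d : X → X → ℝ} {μ : Measure X}

theorem isFiniteMeasure_of_qball (hfinB : ∀ (x : X) (r : ℝ), 0 < r → μ (qball d x r) < ⊤)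
    (hTB : ∀ r : ℝ, 0 < r → ∃ T : Set X, T.Finite ∧ univ ⊆ ⋃ y ∈ T, qball d y r) :
    IsFiniteMeasure μ := by
  obtain ⟨T, hT, hcov⟩ := hTB 1 one_pos
  exact ⟨(measure_mono hcov).trans_lt (measure_biUnion_lt_top hT fun y _ => hfinB y 1 one_pos)⟩

theorem exists_pos_le_measure_qball (hposB : ∀ (x : X) (r : ℝ), 0 < r → 0 < μ (qball d x r))
    (hTB : ∀ r : ℝ, 0 < r → ∃ T : Set X, T.Finite ∧ univ ⊆ ⋃ y ∈ T, qball d y r)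
    {s : ℝ} (hs : 0 < s) : ∃ c > 0, ∀ x, ∃ y, d y x < s ∧ c ≤ μ (qball d y s) := by
  obtain ⟨T, hT, hcov⟩ := hTB s hs
  refine ⟨hT.toFinset.inf fun y => μ (qball d y s),
    (Finset.lt_inf_iff ENNReal.zero_lt_top).2 fun y _ => hposB y s hs, fun x => ?_⟩
  obtain ⟨y, hy, hyx⟩ := mem_iUnion₂.mp (hcov (mem_univ x))
  exact ⟨y, hyx, Finset.inf_le (hT.mem_toFinset.2 hy)⟩

theorem lintegral_inv_lt_top_of_le [IsFiniteMeasure μ] {f : X → ℝ≥0∞} {c : ℝ≥0∞} (hc : 0 < c)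
    (hf : ∀ x, c ≤ f x) : ∫⁻ x, (f x)⁻¹ ∂μ < ⊤ :=
  calc ∫⁻ x, (f x)⁻¹ ∂μ ≤ ∫⁻ _, c⁻¹ ∂μ := lintegral_mono fun x => ENNReal.inv_le_inv.2 (hf x)
    _ = c⁻¹ * μ univ := lintegral_const _
    _ < ⊤ := ENNReal.mul_lt_top (ENNReal.inv_lt_top.2 hc) (measure_lt_top μ univ)

theorem lintegral_inv_measure_qball_lt_top [IsFiniteMeasure μ]
    (hposB : ∀ (x : X) (r : ℝ), 0 < r → 0 < μ (qball d x r))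
    (hTB : ∀ r : ℝ, 0 < r → ∃ T : Set X, T.Finite ∧ univ ⊆ ⋃ y ∈ T, qball d y r)
    {Csym Cd : ℝ} (hCsym : 1 ≤ Csym) (hsym : ∀ x y, d y x ≤ Csym * d x y) (hCd : 0 < Cd)
    (htri : ∀ x y z, d x y ≤ Cd * max (d x z) (d z y)) {ρ : X → X → ℝ} {A r : ℝ} (hA : 0 < A)
    (hρ : ∀ x y, ρ x y ≤ A * d x y) (hr : 0 < r) :
    ∫⁻ x, (μ (qball ρ x r))⁻¹ ∂μ < ⊤ := by
  set s := r / (A * (Cd * Csym))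
  have hsr : A * (Cd * (Csym * s)) = r := by simp only [s]; field_simp
  obtain ⟨c, hc, hcx⟩ := exists_pos_le_measure_qball hposB hTB (show 0 < s by positivity)
  refine lintegral_inv_lt_top_of_le hc fun x => ?_
  obtain ⟨y, hyx, hcy⟩ := hcx x
  have hball : qball d y s ⊆ qball ρ x r := by
    rw [← hsr]
    exact (qball_subset_qball_of_mem hCsym hsym hCd htri (by positivity) hyx).trans
      (qball_subset_qball_of_le hA hρ x)
  exact hcy.trans (measure_mono hball)

end Measure

theorem totallyBounded_integrableQMeasure_general (d : X → X → ℝ)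
    [m : MeasurableSpace X]
    (hnn : ∀ x y, 0 ≤ d x y)
    (heq : ∀ x y, d x y = 0 ↔ x = y)
    (Csym : ℝ) (hCsym : 1 ≤ Csym) (hsym : ∀ x y, d y x ≤ Csym * d x y)
    (Cd : ℝ) (hCd : 1 ≤ Cd) (htri : ∀ x y z, d x y ≤ Cd * max (d x z) (d z y))
    (μ : Measure X)
    (hmeasB : ∀ (x : X) (r : ℝ), 0 < r → MeasurableSet (qball d x r))
    (hposB : ∀ (x : X) (r : ℝ), 0 < r → 0 < μ (qball d x r))
    (hfinB : ∀ (x : X) (r : ℝ), 0 < r → μ (qball d x r) < ⊤)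
    (hTB : ∀ r : ℝ, 0 < r → ∃ T : Set X, T.Finite ∧ Set.univ ⊆ ⋃ y ∈ T, qball d y r) :
    IntegrableQMeasure d μ := by
  have := isFiniteMeasure_of_qball hfinB hTB
  obtain ⟨D, hDc, hD⟩ := exists_countable_qDense hTB
  have hCd₀ : 0 < Cd := one_pos.trans_le hCd
  have hκ : 0 < Cd * Csym := mul_pos hCd₀ (one_pos.trans_le hCsym)
  have hρd := regularize_le hnn hCd₀.le htri hD
  have hdρ := le_regularize hnn hCsym hsym hCd₀.le htri hD
  have hρd' : ∀ x y, regularize d D x y ≤ Cd * Csym * d x y := fun x y =>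
    (hρd x y).trans (by nlinarith [mul_nonneg hCd₀.le (hnn x y)])
  refine ⟨regularize d D, regularize_nonneg hnn,
    eq_zero_iff_of_comparable (regularize_nonneg hnn) hnn heq hρd hdρ,
    ⟨1, le_rfl, fun x y => by rw [one_mul, regularize_comm]⟩,
    ⟨Cd * Cd * (Cd * Csym), one_le_mul_of_one_le_of_one_le
      (one_le_mul_of_one_le_of_one_le hCd hCd) (one_le_mul_of_one_le_of_one_le hCd hCsym),
      quasiTriangle_of_comparable hCd₀.le hκ.le hCd₀.le hρd hdρ htri⟩,
    ⟨Cd * Csym, hκ, fun x y => ⟨(inv_mul_le_iff₀ hκ).2 (hρd' x y), hdρ x y⟩⟩,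
    fun r hr => ⟨measurable_measure_prodMk_left (measurableSet_regularize_lt hnn
      (measurable_of_measurableSet_qball hnn hmeasB) hDc hD r), ?_⟩⟩
  exact lintegral_inv_measure_qball_lt_top hposB hTB hCsym hsym hCd₀ htri hCd₀ hρd hr

/-- on a quasi-metric-measure space, total boundedness of `(X,d)`
implies that `μ` is integrable. -/
theorem totallyBounded_integrableQMeasure (d : X → X → ℝ)
    [m : MeasurableSpace X]
    (hnn : ∀ x y, 0 ≤ d x y)
    (heq : ∀ x y, d x y = 0 ↔ x = y)
    (Csym : ℝ) (hCsym : 1 ≤ Csym) (hsym : ∀ x y, d y x ≤ Csym * d x y)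
    (Cd : ℝ) (hCd : 1 ≤ Cd) (htri : ∀ x y z, d x y ≤ Cd * max (d x z) (d z y))
    (hborel : ∀ s : Set X, IsOpen[quasiMetricTopology d] s → MeasurableSet s)
    (μ : Measure X)
    (hmeasB : ∀ (x : X) (r : ℝ), 0 < r → MeasurableSet (qball d x r))
    (hposB : ∀ (x : X) (r : ℝ), 0 < r → 0 < μ (qball d x r))
    (hfinB : ∀ (x : X) (r : ℝ), 0 < r → μ (qball d x r) < ⊤)
    (hTB : ∀ r : ℝ, 0 < r → ∃ T : Set X, T.Finite ∧ Set.univ ⊆ ⋃ y ∈ T, qball d y r) :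
    IntegrableQMeasure d μ :=
  totallyBounded_integrableQMeasure_general d (m := m) hnn heq Csym hCsym hsym Cd hCd htri μ hmeasB
    hposB hfinB hTB
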